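/- arXiv:1401.2577 — 2 statements merged into one kernel-verified Lean document; each statement's English description precedes it below -/
import Mathlib

section
/- Let R and S be ideals in a Noetherian commutative ring with unit, each admitting a primary decomposition with associated primes {Pᵢ} for R and {P*ⱼ} for S, with S proper. If some associated prime Pᵢ of R is contained in some associated prime P*ⱼ of S, then R is not relatively prime to S (i.e., there exists an ideal T ⊄ S with T·R ⊆ S). -/
/-- An ideal is primary (in the element sense). -/
def PrimaryE {R : Type*} [CommRing R] (Q : Ideal R) : Prop :=
  Q ≠ ⊤ ∧ ∀ a b : R, a * b ∈ Q → a ∉ Q → ∃ n : ℕ, 1 ≤ n ∧ b ^ n ∈ Q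

/-- `M = ⨅ Q i` is a minimal primary decomposition. -/
def MinPrimaryDecomp {R : Type*} [CommRing R] {a : ℕ}
    (M : Ideal R) (Q : Fin a → Ideal R) : Prop :=
  (∀ i, PrimaryE (Q i)) ∧
  M = ⨅ i, Q i ∧
  (∀ i, ¬ (⨅ j ∈ ({j | j ≠ i} : Set (Fin a)), Q j) ≤ Q i) ∧
  (∀ i j, i ≠ j → (Q i).radical ≠ (Q j).radical)

/-!
Say `rad Qᵢ ⊆ rad Q'ⱼ`. Then `I ⊆ rad Q'ⱼ`, so in a Noetherian ring `Iⁿ ⊆ Q'ⱼ` for some `n`,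
and the intersection `J` of the components of `S` other than `Q'ⱼ` satisfies `J·Iⁿ ⊆ S`, while
`J ⊄ S` by minimality of the decomposition. For the largest `k < n` with `J·Iᵏ ⊄ S`, the ideal
`T = J·Iᵏ` has `T·I ⊆ S`.
-/

namespace Ideal

variable {R : Type*} [CommSemiring R]

theorem exists_not_le_mul_le_of_mul_pow_le {I J S : Ideal R} (hJ : ¬ J ≤ S) :
    ∀ {n : ℕ}, J * I ^ n ≤ S → ∃ T : Ideal R, ¬ T ≤ S ∧ T * I ≤ S
  | 0, h => absurd (by simpa using h) hJ
  | n + 1, h => by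
    by_cases hn : J * I ^ n ≤ S
    · exact exists_not_le_mul_le_of_mul_pow_le hJ hn
    · exact ⟨J * I ^ n, hn, by rwa [mul_assoc, ← pow_succ]⟩

theorem mul_le_iInf_of_le_iInf_ne {ι : Type*} {Q : ι → Ideal R} {A B : Ideal R} {j : ι}
    (hA : A ≤ ⨅ k ∈ ({k | k ≠ j} : Set ι), Q k) (hB : B ≤ Q j) : A * B ≤ ⨅ k, Q k := by
  refine le_iInf fun k => ?_
  by_cases hk : k = j
  · exact mul_le_right.trans (hk ▸ hB)
  · exact mul_le_left.trans (hA.trans (biInf_le Q hk))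

end Ideal

theorem MinPrimaryDecomp.le {R : Type*} [CommRing R] {a : ℕ} {M : Ideal R}
    {Q : Fin a → Ideal R} (h : MinPrimaryDecomp M Q) (i : Fin a) : M ≤ Q i :=
  h.2.1 ▸ iInf_le Q i

theorem stmt16_general {R : Type*} [CommRing R] [IsNoetherianRing R]
    (I S : Ideal R)
    (a b : ℕ) (Q : Fin a → Ideal R) (Q' : Fin b → Ideal R)
    (hI : MinPrimaryDecomp I Q) (hSdec : MinPrimaryDecomp S Q')
    (hle : ∃ (i : Fin a) (j : Fin b), (Q i).radical ≤ (Q' j).radical) :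
    ∃ T : Ideal R, ¬ T ≤ S ∧ T * I ≤ S := by
  obtain ⟨i, j, hij⟩ := hle
  have hI_rad : I ≤ (Q' j).radical := (hI.le i).trans (Ideal.le_radical.trans hij)
  obtain ⟨n, hn⟩ := Ideal.exists_pow_le_of_le_radical_of_fg hI_rad (IsNoetherian.noetherian I)
  set J := ⨅ k ∈ ({k | k ≠ j} : Set (Fin b)), Q' k
  have hJ : ¬ J ≤ S := fun hJS => hSdec.2.2.1 j (hJS.trans (hSdec.le j))
  exact Ideal.exists_not_le_mul_le_of_mul_pow_le hJ
    (hSdec.2.1 ▸ Ideal.mul_le_iInf_of_le_iInf_ne le_rfl hn)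

/-- If some associated prime of `I` is contained in some associated prime of
the proper ideal `S`, then `I` is not relatively prime to `S`: there is an
ideal `T` not contained in `S` with `T·I ⊆ S`. -/
theorem stmt16 {R : Type*} [CommRing R] [IsNoetherianRing R]
    (I S : Ideal R) (hS : S ≠ ⊤)
    (a b : ℕ) (Q : Fin a → Ideal R) (Q' : Fin b → Ideal R)
    (hI : MinPrimaryDecomp I Q) (hSdec : MinPrimaryDecomp S Q')
    (hle : ∃ (i : Fin a) (j : Fin b), (Q i).radical ≤ (Q' j).radical) :
    ∃ T : Ideal R, ¬ T ≤ S ∧ T * I ≤ S :=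
  stmt16_general I S a b Q Q' hI hSdec hle
end

section
/- Let M = B₁ ∩ ... ∩ Bₖ = D₁ ∩ ... ∩ Dₗ be two irredundant decompositions of an ideal M into irreducible ideals in a Noetherian commutative ring (irredundant meaning no component contains the intersection of the others). Then k = l. -/
/-!
This is the Kurosh–Ore theorem, valid in any modular lattice with top. If `b` is inf-irreducible
and `b ⊓ n = a = ⨅ d j`, then by modularity `b = ⨅ ((d j ⊓ n) ⊔ b)`, so some `d j ⊓ n ⊔ b = b`,
i.e. `d j ⊓ n = a`: one component of one decomposition can be exchanged for a component of the
other. Exchanging the components `b i` one at a time writes `a` as the meet of at most as many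
`d j` as there are `b i`; irredundancy of the `d j` forces all of them to be used.
-/

/-- An ideal is irreducible if whenever it is the intersection of two ideals,
it equals one of them. -/
def Ideal.IrreducibleIdeal {R : Type*} [CommRing R] (B : Ideal R) : Prop :=
  ∀ A C : Ideal R, B = A ⊓ C → B = A ∨ B = C

section ModularLattice

variable {α ι κ : Type*} [Lattice α] [OrderTop α] [IsModularLattice α]

theorem InfIrred.exists_exchange {a b n : α} {s : Finset κ} {d : κ → α} (hb : InfIrred b)
    (hbn : b ⊓ n = a) (hd : s.inf d = a) : ∃ j ∈ s, d j ⊓ n = a := by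
  have ha_le_n : a ≤ n := hbn ▸ inf_le_right
  have ha_le_d : ∀ j ∈ s, a ≤ d j := fun j hj => hd ▸ Finset.inf_le hj
  obtain ⟨j₀, hj₀⟩ : s.Nonempty := by
    rw [Finset.nonempty_iff_ne_empty]
    rintro rfl
    rw [Finset.inf_empty] at hd
    exact hb.ne_top (top_le_iff.mp (hd.trans_le (hbn ▸ inf_le_left)))
  have hcut : ∀ j ∈ s, (d j ⊓ n ⊔ b) ⊓ n = d j ⊓ n := fun j hj => by
    rw [sup_inf_assoc_of_le b inf_le_right, hbn]
    exact sup_eq_left.mpr (le_inf (ha_le_d j hj) ha_le_n)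
  set x := s.inf fun j => d j ⊓ n ⊔ b
  have hbx : b ≤ x := Finset.le_inf fun _ _ => le_sup_right
  have hxn : x ⊓ n ≤ b := calc
    x ⊓ n ≤ s.inf d := Finset.le_inf fun j hj =>
      (inf_le_inf_right n (Finset.inf_le hj)).trans ((hcut j hj).le.trans inf_le_left)
    _ ≤ b := hd ▸ hbn ▸ inf_le_left
  have hx : x = b := by
    refine le_antisymm ?_ hbx
    calc x = x ⊓ (n ⊔ b) :=
          (inf_eq_left.mpr ((Finset.inf_le hj₀).trans (sup_le_sup_right inf_le_right b))).symm
      _ = x ⊓ n ⊔ b := (inf_sup_assoc_of_le n hbx).symm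
      _ ≤ b := sup_le hxn le_rfl
  obtain ⟨j, hj, hdj⟩ := hb.finset_inf_eq hx
  refine ⟨j, hj, le_antisymm ?_ (le_inf (ha_le_d j hj) ha_le_n)⟩
  exact hbn ▸ le_inf (sup_eq_right.mp hdj) inf_le_right

theorem exists_subset_card_le_of_inf_eq {a : α} {s : Finset κ} {t : Finset ι} {d : κ → α}
    {b : ι → α} (hb : ∀ i ∈ t, InfIrred (b i)) (hd : s.inf d = a) (n : α)
    (htn : t.inf b ⊓ n = a) : ∃ S ⊆ s, S.card ≤ t.card ∧ S.inf d ⊓ n = a := by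
  classical
  induction t using Finset.induction_on generalizing n with
  | empty => exact ⟨∅, Finset.empty_subset s, le_rfl, by simpa using htn⟩
  | @insert i t hit ih =>
    have hin : t.inf b ⊓ (b i ⊓ n) = a := by
      rw [← htn, Finset.inf_insert]
      ac_rfl
    obtain ⟨S, hSs, hcard, hS⟩ :=
      ih (fun i' hi' => hb i' (Finset.mem_insert_of_mem hi')) (b i ⊓ n) hin
    have hbi : b i ⊓ (S.inf d ⊓ n) = a := by
      rw [← hS]
      ac_rfl
    obtain ⟨j, hj, hdj⟩ := (hb i (Finset.mem_insert_self i t)).exists_exchange hbi hd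
    refine ⟨insert j S, Finset.insert_subset hj hSs, ?_, by rw [Finset.inf_insert, inf_assoc, hdj]⟩
    rw [Finset.card_insert_of_notMem hit]
    exact (Finset.card_insert_le j S).trans (Nat.succ_le_succ hcard)

theorem card_le_card_of_inf_eq_of_infIrred [DecidableEq κ] {s : Finset κ} {t : Finset ι}
    {d : κ → α} {b : ι → α} (hb : ∀ i ∈ t, InfIrred (b i))
    (hd : ∀ j ∈ s, ¬ (s.erase j).inf d ≤ d j) (h : t.inf b = s.inf d) : s.card ≤ t.card := by
  obtain ⟨S, hSs, hcard, hS⟩ :=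
    exists_subset_card_le_of_inf_eq (s := s) (d := d) hb rfl ⊤ (by rw [inf_top_eq, h])
  rw [inf_top_eq] at hS
  suffices s ⊆ S from (Finset.card_le_card this).trans hcard
  intro j hj
  by_contra hjS
  refine hd j hj ((Finset.inf_mono fun j' hj' => ?_).trans (hS.trans_le (Finset.inf_le hj)))
  exact Finset.mem_erase.mpr ⟨fun h => hjS (h ▸ hj'), hSs hj'⟩

end ModularLattice

theorem Finset.inf_univ_erase_eq_iInf_ne {α ι : Type*} [CompleteLattice α] [Fintype ι]
    [DecidableEq ι] (f : ι → α) (i : ι) :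
    (Finset.univ.erase i).inf f = ⨅ (i') (_ : i' ≠ i), f i' := by
  simp only [Finset.inf_eq_iInf, Finset.mem_erase, Finset.mem_univ, and_true]

theorem Fintype.card_eq_of_iInf_eq_of_infIrred {α ι κ : Type*} [CompleteLattice α]
    [IsModularLattice α] [Fintype ι] [Fintype κ] [DecidableEq ι] [DecidableEq κ]
    {b : ι → α} {d : κ → α} (hbirr : ∀ i, InfIrred (b i)) (hdirr : ∀ j, InfIrred (d j))
    (hb : ∀ i, ¬ (⨅ (i') (_ : i' ≠ i), b i') ≤ b i)
    (hd : ∀ j, ¬ (⨅ (j') (_ : j' ≠ j), d j') ≤ d j) (h : ⨅ i, b i = ⨅ j, d j) :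
    Fintype.card ι = Fintype.card κ := by
  have h' : Finset.univ.inf b = Finset.univ.inf d := by
    rwa [Finset.inf_univ_eq_iInf, Finset.inf_univ_eq_iInf]
  refine le_antisymm ?_ ?_
  · exact card_le_card_of_inf_eq_of_infIrred (fun j _ => hdirr j)
      (fun i _ => Finset.inf_univ_erase_eq_iInf_ne b i ▸ hb i) h'.symm
  · exact card_le_card_of_inf_eq_of_infIrred (fun i _ => hbirr i)
      (fun j _ => Finset.inf_univ_erase_eq_iInf_ne d j ▸ hd j) h'

theorem Ideal.IrreducibleIdeal.infIrred {R : Type*} [CommRing R] {I : Ideal R}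
    (hI : I.IrreducibleIdeal) (hI_ne_top : I ≠ ⊤) : InfIrred I :=
  ⟨fun hmax => hI_ne_top (hmax.eq_top), fun A C hAC => (hI A C hAC.symm).imp Eq.symm Eq.symm⟩

theorem stmt18_general {R : Type*} [CommRing R]
    (M : Ideal R) (k l : ℕ) (B : Fin k → Ideal R) (D : Fin l → Ideal R)
    (hBirr : ∀ i, (B i).IrreducibleIdeal) (hDirr : ∀ j, (D j).IrreducibleIdeal)
    (hBM : M = ⨅ i, B i) (hDM : M = ⨅ j, D j)
    (hBshort : ∀ i, ¬ (⨅ j ∈ ({j | j ≠ i} : Set (Fin k)), B j) ≤ B i)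
    (hDshort : ∀ i, ¬ (⨅ j ∈ ({j | j ≠ i} : Set (Fin l)), D j) ≤ D i) :
    k = l := by
  have hB : ∀ i, InfIrred (B i) := fun i => (hBirr i).infIrred fun h => hBshort i (h ▸ le_top)
  have hD : ∀ j, InfIrred (D j) := fun j => (hDirr j).infIrred fun h => hDshort j (h ▸ le_top)
  simpa using Fintype.card_eq_of_iInf_eq_of_infIrred hB hD hBshort hDshort (hBM ▸ hDM)

/-- Two irredundant decompositions of an ideal into irreducible ideals in a
Noetherian commutative ring have the same number of components. -/
theorem stmt18 {R : Type*} [CommRing R] [IsNoetherianRing R]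
    (M : Ideal R) (k l : ℕ) (B : Fin k → Ideal R) (D : Fin l → Ideal R)
    (hBirr : ∀ i, (B i).IrreducibleIdeal) (hDirr : ∀ j, (D j).IrreducibleIdeal)
    (hBM : M = ⨅ i, B i) (hDM : M = ⨅ j, D j)
    (hBshort : ∀ i, ¬ (⨅ j ∈ ({j | j ≠ i} : Set (Fin k)), B j) ≤ B i)
    (hDshort : ∀ i, ¬ (⨅ j ∈ ({j | j ≠ i} : Set (Fin l)), D j) ≤ D i) :
    k = l :=
  stmt18_general M k l B D hBirr hDirr hBM hDM hBshort hDshort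
end
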